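/- arXiv:2312.14142 — 4 statements merged into one kernel-verified Lean document; each statement's English description precedes it below -/
import Mathlib

section
/- Let A be a nonzero Hermitian complex matrix with trace zero, and let r denote the rank of A (so r ≥ 2). Then the operator norm of A is bounded by the Frobenius norm as ‖A‖_∞ ≤ √((r-1)/r) · ‖A‖_F. -/
/-!
Diagonalise `A`: its operator norm is the largest `|λⱼ|`, `Tr A² = ∑ λᵢ²`, and its rank `r` counts
the nonzero `λᵢ`. As `∑ λᵢ = 0`, the other `r - 1` nonzero eigenvalues sum to `-λⱼ`, so
Cauchy–Schwarz gives `λⱼ² ≤ (r - 1)(∑ λᵢ² - λⱼ²)`, i.e. `r λⱼ² ≤ (r - 1) ∑ λᵢ²`.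
-/

/-- The operator (spectral) norm of a square complex matrix, i.e. the norm of the induced
continuous linear endomorphism of Euclidean space. -/
noncomputable def opNorm {D : ℕ} (A : Matrix (Fin D) (Fin D) ℂ) : ℝ :=
  ‖Matrix.toEuclideanCLM (𝕜 := ℂ) A‖

/-- The Frobenius (Hilbert–Schmidt) norm of a Hermitian matrix, `√(Tr(A²))`. -/
noncomputable def frobNorm {D : ℕ} (A : Matrix (Fin D) (Fin D) ℂ) : ℝ :=
  Real.sqrt ((A * A).trace.re)

open Finset

section ZeroSum

variable {ι : Type*} [Fintype ι] {μ : ι → ℝ}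

lemma card_support_mul_sq_le_of_sum_eq_zero (hsum : ∑ i, μ i = 0) {j : ι} (hj : μ j ≠ 0) :
    #{i | μ i ≠ 0} * μ j ^ 2 ≤ (#{i | μ i ≠ 0} - 1 : ℝ) * ∑ i, μ i ^ 2 := by
  classical
  set s : Finset ι := {i | μ i ≠ 0}
  have hjs : j ∈ s := by simp [s, hj]
  have hsum_erase : ∑ i ∈ s.erase j, μ i = -μ j := by
    rw [eq_neg_iff_add_eq_zero, sum_erase_add _ _ hjs, sum_filter_ne_zero, hsum]
  have hsq_erase : ∑ i ∈ s.erase j, μ i ^ 2 = ∑ i, μ i ^ 2 - μ j ^ 2 := by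
    rw [eq_sub_iff_add_eq, sum_erase_add _ _ hjs]
    exact sum_subset (subset_univ s) fun i _ hi => by simpa [s] using hi
  have hcauchy := sq_sum_le_card_mul_sum_sq (s := s.erase j) (f := μ)
  rw [hsum_erase, hsq_erase, neg_sq, card_erase_of_mem hjs,
    Nat.cast_sub (card_pos.2 ⟨j, hjs⟩), Nat.cast_one] at hcauchy
  linarith

lemma norm_le_sqrt_card_support_mul_sqrt_sum_sq_of_sum_eq_zero (hsum : ∑ i, μ i = 0) :
    ‖μ‖ ≤ √((#{i | μ i ≠ 0} - 1 : ℝ) / #{i | μ i ≠ 0}) * √(∑ i, μ i ^ 2) := by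
  refine (pi_norm_le_iff_of_nonneg (by positivity)).2 fun j => ?_
  rw [Real.norm_eq_abs]
  by_cases hj : μ j = 0
  · rw [hj, abs_zero]; positivity
  have hr : (0 : ℝ) < #{i | μ i ≠ 0} := by
    exact_mod_cast card_pos.2 ⟨j, by simp [hj]⟩
  rw [← Real.sqrt_mul' _ (by positivity), ← Real.sqrt_sq_eq_abs]
  refine Real.sqrt_le_sqrt ?_
  rw [div_mul_eq_mul_div, le_div_iff₀ hr, mul_comm]
  exact card_support_mul_sq_le_of_sum_eq_zero hsum hj

end ZeroSum

namespace Matrix.IsHermitian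

variable {𝕜 n : Type*} [RCLike 𝕜] [Fintype n] [DecidableEq n] {A : Matrix n n 𝕜}

open scoped Matrix.Norms.L2Operator in
lemma l2_opNorm_eq_norm_eigenvalues (hA : A.IsHermitian) : ‖A‖ = ‖hA.eigenvalues‖ := by
  conv_lhs => rw [hA.spectral_theorem, Unitary.conjStarAlgAut_apply, ← Unitary.coe_star]
  rw [CStarRing.norm_mul_coe_unitary, CStarRing.norm_coe_unitary_mul, l2_opNorm_diagonal]
  simp [Pi.norm_def]

lemma re_trace_mul_self_eq_sum_sq_eigenvalues (hA : A.IsHermitian) :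
    RCLike.re (A * A).trace = ∑ i, hA.eigenvalues i ^ 2 := by
  conv_lhs => rw [hA.spectral_theorem, ← map_mul, Unitary.conjStarAlgAut_apply, trace_mul_cycle,
    Unitary.coe_star_mul_self, one_mul, diagonal_mul_diagonal, trace_diagonal]
  simp [sq]

end Matrix.IsHermitian

theorem opNorm_le_sqrt_rank_mul_frobNorm_general {D : ℕ} (A : Matrix (Fin D) (Fin D) ℂ)
    (hHerm : A.IsHermitian) (htr : A.trace = 0) :
    opNorm A ≤ Real.sqrt (((A.rank : ℝ) - 1) / (A.rank : ℝ)) * frobNorm A := by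
  have hsum : ∑ i, hHerm.eigenvalues i = 0 := by
    have h := hHerm.trace_eq_sum_eigenvalues.symm.trans htr
    rwa [← RCLike.ofReal_sum, RCLike.ofReal_eq_zero] at h
  have hop : opNorm A = ‖hHerm.eigenvalues‖ := hHerm.l2_opNorm_eq_norm_eigenvalues
  have hfrob : frobNorm A = √(∑ i, hHerm.eigenvalues i ^ 2) :=
    congrArg Real.sqrt hHerm.re_trace_mul_self_eq_sum_sq_eigenvalues
  have hrank : A.rank = #{i | hHerm.eigenvalues i ≠ 0} := by
    rw [hHerm.rank_eq_card_non_zero_eigs, Fintype.card_subtype]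
  rw [hop, hfrob, hrank]
  exact norm_le_sqrt_card_support_mul_sqrt_sum_sq_of_sum_eq_zero hsum

/-- **Lemma 1**: for a nonzero trace-zero Hermitian matrix `A` of rank `r`,
`‖A‖_∞ ≤ √((r-1)/r) · ‖A‖_F`. -/
theorem opNorm_le_sqrt_rank_mul_frobNorm {D : ℕ} (A : Matrix (Fin D) (Fin D) ℂ)
    (hHerm : A.IsHermitian) (hne : A ≠ 0) (htr : A.trace = 0) :
    opNorm A ≤ Real.sqrt (((A.rank : ℝ) - 1) / (A.rank : ℝ)) * frobNorm A :=
  opNorm_le_sqrt_rank_mul_frobNorm_general A hHerm htr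
end

section
/- Let n ≥ 1, d ≥ 1, D ≥ 1. For every family of quantum states ρ_x on ℂ^D indexed by strings x ∈ [d]^n, and every family of d-outcome POVMs (M_{b|y})_{b∈[d]} on ℂ^D indexed by y ∈ [n], the average success probability satisfies (1/(n dⁿ)) Σ_{x∈[d]^n} Σ_{y=1}^n Tr(ρ_x M_{x_y|y}) ≤ 1/d + (D-1)/√(n d D). -/
/-!
View `D × D` matrices as vectors of `ℂ^(D×D)` with the real inner product
`⟪A, B⟫ = Re tr (Aᴴ B)` and split off traces: for a state `ρ`,
`Re tr (ρ M) = Re tr M / D + ⟪ρ̂, M̂⟫`, where `X̂ = X - (tr X / D) • 1`.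
Summed over `x` and `y`, the first terms give `n dⁿ⁻¹`. The traceless parts `M̂_{b|y}` of each
POVM sum to zero, so the vectors `M̂_{x_y|y}` for different `y` are orthogonal on average over `x`:
`∑ₓ ‖∑_y M̂_{x_y|y}‖² = dⁿ⁻¹ ∑_{y,b} ‖M̂_{b|y}‖² ≤ dⁿ⁻¹ n (D - 1)`, because
`‖M̂‖² ≤ (1 - 1/D) tr M` whenever `0 ≤ M ≤ 1`. Cauchy–Schwarz together with
`‖ρ̂ₓ‖² ≤ 1 - 1/D` bounds the remaining sum.
-/

open scoped ComplexOrder InnerProductSpace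

def IsState {D : ℕ} (ρ : Matrix (Fin D) (Fin D) ℂ) : Prop :=
  ρ.PosSemidef ∧ ρ.trace = 1

def IsPOVM {d D : ℕ} (M : Fin d → Matrix (Fin D) (Fin D) ℂ) : Prop :=
  (∀ b, (M b).PosSemidef) ∧ ∑ b, M b = 1

section

variable {ι β : Type*} [Fintype ι] [DecidableEq ι] [Fintype β]

theorem Fintype.sum_pi_apply_apply_eq_zero {M : Type*} [AddCommMonoid M] {i j : ι} (hij : i ≠ j)
    (f : β → β → M) (hf : ∀ c, ∑ b, f b c = 0) : ∑ x : ι → β, f (x i) (x j) = 0 := by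
  rw [← (Equiv.funSplitAt i β).symm.sum_comp, Fintype.sum_prod_type_right]
  refine Finset.sum_eq_zero fun r _ => ?_
  simpa [Equiv.funSplitAt, Equiv.piSplitAt, hij.symm] using hf (r ⟨j, hij.symm⟩)

variable {E : Type*} [NormedAddCommGroup E] [InnerProductSpace ℝ E]

theorem sum_norm_sum_apply_sq (w : ι → β → E) (hw : ∀ i, ∑ b, w i b = 0) :
    ∑ x : ι → β, ‖∑ i, w i (x i)‖ ^ 2
      = Fintype.card β ^ (Fintype.card ι - 1) * ∑ i, ∑ b, ‖w i b‖ ^ 2 := by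
  have hcross : ∀ i j, i ≠ j → ∑ x : ι → β, ⟪w i (x i), w j (x j)⟫_ℝ = 0 := fun i j hij =>
    Fintype.sum_pi_apply_apply_eq_zero hij (fun b c => ⟪w i b, w j c⟫_ℝ) fun c => by
      rw [← sum_inner, hw, inner_zero_left]
  calc ∑ x : ι → β, ‖∑ i, w i (x i)‖ ^ 2
      = ∑ i, ∑ j, ∑ x : ι → β, ⟪w i (x i), w j (x j)⟫_ℝ := by
        simp_rw [← real_inner_self_eq_norm_sq, sum_inner, inner_sum]
        rw [Finset.sum_comm]
        exact Finset.sum_congr rfl fun i _ => Finset.sum_comm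
    _ = ∑ i, ∑ x : ι → β, ‖w i (x i)‖ ^ 2 := by
        refine Finset.sum_congr rfl fun i _ => ?_
        rw [Finset.sum_eq_single i (fun j _ hji => hcross i j hji.symm) (by simp)]
        simp_rw [real_inner_self_eq_norm_sq]
    _ = _ := by
        rw [Finset.mul_sum]
        refine Finset.sum_congr rfl fun i _ => ?_
        simpa using Fintype.sum_piFinset_apply (fun b => ‖w i b‖ ^ 2) Finset.univ i

theorem sq_sum_inner_le {α : Type*} [Fintype α] (v u : α → E) {R : ℝ}
    (hv : ∀ a, ‖v a‖ ^ 2 ≤ R) :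
    (∑ a, ⟪v a, u a⟫_ℝ) ^ 2 ≤ R * Fintype.card α * ∑ a, ‖u a‖ ^ 2 := by
  have hCS : |∑ a, ⟪v a, u a⟫_ℝ| ≤ ∑ a, ‖v a‖ * ‖u a‖ :=
    (Finset.abs_sum_le_sum_abs _ _).trans
      (Finset.sum_le_sum fun a _ => abs_real_inner_le_norm _ _)
  have hvR : ∑ a, ‖v a‖ ^ 2 ≤ R * Fintype.card α := by
    simpa [mul_comm] using Finset.sum_le_sum fun a (_ : a ∈ Finset.univ) => hv a
  calc (∑ a, ⟪v a, u a⟫_ℝ) ^ 2 ≤ (∑ a, ‖v a‖ * ‖u a‖) ^ 2 := by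
        rw [← sq_abs]; exact pow_le_pow_left₀ (abs_nonneg _) hCS 2
    _ ≤ (∑ a, ‖v a‖ ^ 2) * ∑ a, ‖u a‖ ^ 2 := Finset.sum_mul_sq_le_sq_mul_sq _ _ _
    _ ≤ R * Fintype.card α * ∑ a, ‖u a‖ ^ 2 := by gcongr

theorem sq_sum_inner_sum_apply_le (v : (ι → β) → E) (w : ι → β → E) {R : ℝ}
    (hv : ∀ x, ‖v x‖ ^ 2 ≤ R) (hw : ∀ i, ∑ b, w i b = 0) :
    (∑ x : ι → β, ⟪v x, ∑ i, w i (x i)⟫_ℝ) ^ 2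
      ≤ R * Fintype.card β ^ Fintype.card ι
        * (Fintype.card β ^ (Fintype.card ι - 1) * ∑ i, ∑ b, ‖w i b‖ ^ 2) := by
  have h := sq_sum_inner_le v (fun x => ∑ i, w i (x i)) hv
  rwa [sum_norm_sum_apply_sq w hw, Fintype.card_fun, Nat.cast_pow] at h

end

namespace Matrix

variable {m : Type*}

lemma PosSemidef.norm_apply_sq_le {A : Matrix m m ℂ} (hA : A.PosSemidef) (i j : m) :
    ‖A i j‖ ^ 2 ≤ (A i i).re * (A j j).re := by
  have hdet := (hA.submatrix ![i, j]).det_nonneg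
  rw [det_fin_two] at hdet
  simp only [submatrix_apply, cons_val_zero, cons_val_one] at hdet
  rw [← hA.1.apply j i, Complex.star_def, Complex.mul_conj'] at hdet
  have hii := Complex.nonneg_iff.1 (hA.diag_nonneg (i := i))
  have hjj := Complex.nonneg_iff.1 (hA.diag_nonneg (i := j))
  simpa [Complex.mul_re, ← hii.2, ← hjj.2, ← Complex.ofReal_pow] using
    (Complex.nonneg_iff.1 hdet).1

noncomputable def frobVec (A : Matrix m m ℂ) : EuclideanSpace ℂ (m × m) := WithLp.toLp 2 A.vec

lemma frobVec_zero : frobVec (0 : Matrix m m ℂ) = 0 := by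
  rw [frobVec, vec_zero, WithLp.toLp_zero]

lemma frobVec_sum {ι : Type*} (s : Finset ι) (A : ι → Matrix m m ℂ) :
    frobVec (∑ i ∈ s, A i) = ∑ i ∈ s, frobVec (A i) := by
  rw [frobVec, vec_sum, WithLp.toLp_sum]; rfl

variable [Fintype m]

lemma real_inner_frobVec (A B : Matrix m m ℂ) :
    ⟪frobVec A, frobVec B⟫_ℝ = (Aᴴ * B).trace.re := by
  rw [← star_vec_dotProduct_vec]
  simp [frobVec, PiLp.inner_apply, Complex.inner, Complex.re_sum, dotProduct, mul_comm]

lemma norm_frobVec_sq_eq_re_trace (A : Matrix m m ℂ) : ‖frobVec A‖ ^ 2 = (Aᴴ * A).trace.re := by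
  rw [← real_inner_self_eq_norm_sq, real_inner_frobVec]

lemma norm_frobVec_sq (A : Matrix m m ℂ) : ‖frobVec A‖ ^ 2 = ∑ i, ∑ j, ‖A i j‖ ^ 2 := by
  rw [frobVec, EuclideanSpace.norm_sq_eq, Fintype.sum_prod_type, Finset.sum_comm]; rfl

lemma PosSemidef.norm_frobVec_sq_le {A : Matrix m m ℂ} (hA : A.PosSemidef) :
    ‖frobVec A‖ ^ 2 ≤ A.trace.re ^ 2 :=
  calc ‖frobVec A‖ ^ 2 = ∑ i, ∑ j, ‖A i j‖ ^ 2 := norm_frobVec_sq A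
    _ ≤ ∑ i, ∑ j, (A i i).re * (A j j).re :=
        Finset.sum_le_sum fun i _ => Finset.sum_le_sum fun j _ => hA.norm_apply_sq_le i j
    _ = A.trace.re ^ 2 := by
        rw [sq, trace, Complex.re_sum, Finset.sum_mul_sum]; rfl

variable [DecidableEq m]

lemma PosSemidef.trace_mul_nonneg {A B : Matrix m m ℂ} (hA : A.PosSemidef) (hB : B.PosSemidef) :
    0 ≤ (A * B).trace := by
  obtain ⟨C, rfl⟩ : ∃ C : Matrix m m ℂ, A = Cᴴ * C := by
    open scoped MatrixOrder in exact CStarAlgebra.nonneg_iff_eq_star_mul_self.mp hA.nonneg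
  rw [mul_assoc, trace_mul_comm]
  exact (hB.mul_mul_conjTranspose_same C).trace_nonneg

lemma norm_frobVec_sq_le_of_posSemidef_one_sub {Q : Matrix m m ℂ} (hQ : Q.PosSemidef)
    (h1Q : (1 - Q).PosSemidef) : ‖frobVec Q‖ ^ 2 ≤ Q.trace.re := by
  have h := (Complex.nonneg_iff.1 (hQ.trace_mul_nonneg h1Q)).1
  rw [mul_sub, mul_one, trace_sub, Complex.sub_re] at h
  rw [norm_frobVec_sq_eq_re_trace, hQ.1.eq]
  linarith

noncomputable def tracelessPart (A : Matrix m m ℂ) : Matrix m m ℂ :=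
  A - (A.trace / Fintype.card m) • 1

lemma tracelessPart_sum {ι : Type*} (s : Finset ι) (A : ι → Matrix m m ℂ) :
    tracelessPart (∑ i ∈ s, A i) = ∑ i ∈ s, tracelessPart (A i) := by
  simp [tracelessPart, trace_sum, Finset.sum_div, Finset.sum_smul]

variable [Nonempty m]

lemma tracelessPart_one : tracelessPart (1 : Matrix m m ℂ) = 0 := by
  simp [tracelessPart]

lemma trace_conjTranspose_mul_eq_add_tracelessPart (A B : Matrix m m ℂ) :
    (Aᴴ * B).trace = star A.trace * B.trace / Fintype.card m
      + ((tracelessPart A)ᴴ * tracelessPart B).trace := by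
  have hN : (Fintype.card m : ℂ) ≠ 0 := by simp
  simp only [tracelessPart, conjTranspose_sub, conjTranspose_smul, conjTranspose_one, sub_mul,
    mul_sub, Matrix.smul_mul, Matrix.mul_smul, one_mul, mul_one, trace_sub, trace_smul, trace_one,
    trace_conjTranspose, smul_eq_mul, star_div₀, star_natCast]
  field_simp
  ring

lemma norm_frobVec_tracelessPart_sq (A : Matrix m m ℂ) :
    ‖frobVec (tracelessPart A)‖ ^ 2 = ‖frobVec A‖ ^ 2 - ‖A.trace‖ ^ 2 / Fintype.card m := by
  have h := congrArg Complex.re (trace_conjTranspose_mul_eq_add_tracelessPart A A)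
  rw [Complex.star_def, Complex.conj_mul', ← Complex.ofReal_natCast, ← Complex.ofReal_pow,
    ← Complex.ofReal_div, Complex.add_re, Complex.ofReal_re] at h
  rw [norm_frobVec_sq_eq_re_trace, norm_frobVec_sq_eq_re_trace, h]
  ring

lemma re_trace_mul_eq_add_inner {ρ : Matrix m m ℂ} (hρ : ρ.IsHermitian) (htr : ρ.trace = 1)
    (B : Matrix m m ℂ) :
    (ρ * B).trace.re = B.trace.re / Fintype.card m
      + ⟪frobVec (tracelessPart ρ), frobVec (tracelessPart B)⟫_ℝ := by
  have h := trace_conjTranspose_mul_eq_add_tracelessPart ρ B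
  rw [hρ.eq, htr, star_one, one_mul] at h
  rw [h, real_inner_frobVec, Complex.add_re, ← Complex.ofReal_natCast, Complex.div_ofReal_re]

lemma norm_frobVec_tracelessPart_sq_le_of_posSemidef_one_sub {Q : Matrix m m ℂ}
    (hQ : Q.PosSemidef) (h1Q : (1 - Q).PosSemidef) :
    ‖frobVec (tracelessPart Q)‖ ^ 2 ≤ (1 - 1 / Fintype.card m) * Q.trace.re := by
  have htr := Complex.nonneg_iff.1 hQ.trace_nonneg
  have hnorm : ‖Q.trace‖ = Q.trace.re := by
    rw [← Complex.re_add_im Q.trace, ← htr.2]; simp [htr.1]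
  have hN : (1 : ℝ) ≤ Fintype.card m := by exact_mod_cast Fintype.card_pos
  have hq := norm_frobVec_sq_le_of_posSemidef_one_sub hQ h1Q
  have hq2 := hQ.norm_frobVec_sq_le
  rw [norm_frobVec_tracelessPart_sq, hnorm]
  set q := ‖frobVec Q‖ ^ 2
  set t := Q.trace.re
  set N : ℝ := (Fintype.card m : ℝ)
  rw [one_sub_div (by positivity), div_mul_eq_mul_div, sub_le_iff_le_add, ← add_div,
    le_div_iff₀ (by positivity)]
  rcases le_total t 1 with ht | ht <;> nlinarith [htr.1]

end Matrix

open Matrix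

section QuantumRandomAccessCode

variable {d D : ℕ}

lemma IsPOVM.one_sub_posSemidef {M : Fin d → Matrix (Fin D) (Fin D) ℂ} (hM : IsPOVM M)
    (b : Fin d) : (1 - M b).PosSemidef := by
  rw [← hM.2, ← Finset.sum_erase_add _ _ (Finset.mem_univ b), add_sub_cancel_right]
  exact posSemidef_sum _ fun b' _ => hM.1 b'

lemma IsPOVM.sum_re_trace {M : Fin d → Matrix (Fin D) (Fin D) ℂ} (hM : IsPOVM M) :
    ∑ b, (M b).trace.re = D := by
  rw [← Complex.re_sum, ← trace_sum, hM.2, trace_one]; simp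

variable [NeZero D]

lemma IsPOVM.sum_tracelessPart {M : Fin d → Matrix (Fin D) (Fin D) ℂ} (hM : IsPOVM M) :
    ∑ b, tracelessPart (M b) = 0 := by
  rw [← tracelessPart_sum, hM.2, tracelessPart_one]

lemma IsPOVM.sum_norm_frobVec_tracelessPart_sq_le {M : Fin d → Matrix (Fin D) (Fin D) ℂ}
    (hM : IsPOVM M) : ∑ b, ‖frobVec (tracelessPart (M b))‖ ^ 2 ≤ D - 1 :=
  calc ∑ b, ‖frobVec (tracelessPart (M b))‖ ^ 2 ≤ ∑ b, (1 - 1 / D) * (M b).trace.re :=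
        Finset.sum_le_sum fun b _ => by
          simpa using norm_frobVec_tracelessPart_sq_le_of_posSemidef_one_sub (hM.1 b)
            (hM.one_sub_posSemidef b)
    _ = D - 1 := by
        rw [← Finset.mul_sum, hM.sum_re_trace, one_sub_mul,
          one_div_mul_cancel (Nat.cast_ne_zero.2 (NeZero.ne D))]

lemma IsState.norm_frobVec_tracelessPart_sq_le {ρ : Matrix (Fin D) (Fin D) ℂ} (hρ : IsState ρ) :
    ‖frobVec (tracelessPart ρ)‖ ^ 2 ≤ 1 - 1 / D := by
  have h := hρ.1.norm_frobVec_sq_le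
  rw [hρ.2] at h
  rw [norm_frobVec_tracelessPart_sq, hρ.2]
  simp only [Complex.one_re, one_pow, norm_one, Fintype.card_fin] at h ⊢
  linarith

variable {ι : Type*} [Fintype ι] [DecidableEq ι]
  {ρ : (ι → Fin d) → Matrix (Fin D) (Fin D) ℂ} {M : ι → Fin d → Matrix (Fin D) (Fin D) ℂ}

lemma sum_sum_re_trace_mul_eq_add_inner (hρ : ∀ x, IsState (ρ x)) (hM : ∀ y, IsPOVM (M y)) :
    ∑ x : ι → Fin d, ∑ y, (ρ x * M y (x y)).trace.re
      = Fintype.card ι * (d : ℝ) ^ (Fintype.card ι - 1)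
        + ∑ x : ι → Fin d,
            ⟪frobVec (tracelessPart (ρ x)), ∑ y, frobVec (tracelessPart (M y (x y)))⟫_ℝ := by
  have hfirst : ∀ y, ∑ x : ι → Fin d, (M y (x y)).trace.re / D
      = (d : ℝ) ^ (Fintype.card ι - 1) := fun y => by
    simpa [← Finset.sum_div, (hM y).sum_re_trace] using
      Fintype.sum_piFinset_apply (fun b => (M y b).trace.re / D) Finset.univ y
  simp_rw [re_trace_mul_eq_add_inner (hρ _).1.1 (hρ _).2, Fintype.card_fin,
    Finset.sum_add_distrib, inner_sum]
  rw [Finset.sum_comm, Finset.sum_congr rfl fun y _ => hfirst y]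
  simp

lemma sq_sum_inner_tracelessPart_le (hD : 1 ≤ D) (hρ : ∀ x, IsState (ρ x))
    (hM : ∀ y, IsPOVM (M y)) :
    (∑ x : ι → Fin d,
        ⟪frobVec (tracelessPart (ρ x)), ∑ y, frobVec (tracelessPart (M y (x y)))⟫_ℝ) ^ 2
      ≤ (1 - 1 / (D : ℝ)) * (d : ℝ) ^ Fintype.card ι
        * ((d : ℝ) ^ (Fintype.card ι - 1) * (Fintype.card ι * ((D : ℝ) - 1))) := by
  refine (sq_sum_inner_sum_apply_le (fun x => frobVec (tracelessPart (ρ x)))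
    (fun y b => frobVec (tracelessPart (M y b)))
    (fun x => (hρ x).norm_frobVec_tracelessPart_sq_le) fun y => ?_).trans ?_
  · rw [← frobVec_sum, (hM y).sum_tracelessPart, frobVec_zero]
  · simp only [Fintype.card_fin]
    gcongr
    · exact mul_nonneg (sub_nonneg.2 (div_le_one_of_le₀ (by exact_mod_cast hD) (by positivity)))
        (by positivity)
    · exact (Finset.sum_le_sum fun y _ => (hM y).sum_norm_frobVec_tracelessPart_sq_le).trans_eq
        (by simp [mul_sub])

end QuantumRandomAccessCode

/-- **Result 1**: the average success probability of any quantum random access code with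
`n` inputs from a `d`-letter alphabet and message dimension `D` is at most
`1/d + (D-1)/√(ndD)`. -/
theorem qrac_bound_one {n d D : ℕ} (hn : 1 ≤ n) (hd : 1 ≤ d) (hD : 1 ≤ D)
    (ρ : (Fin n → Fin d) → Matrix (Fin D) (Fin D) ℂ)
    (M : Fin n → Fin d → Matrix (Fin D) (Fin D) ℂ)
    (hρ : ∀ x, IsState (ρ x))
    (hM : ∀ y, IsPOVM (M y)) :
    (1 / ((n : ℝ) * (d : ℝ) ^ n)) *
        ∑ x : Fin n → Fin d, ∑ y : Fin n, ((ρ x * M y (x y)).trace).re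
      ≤ 1 / (d : ℝ) + ((D : ℝ) - 1) / Real.sqrt ((n : ℝ) * (d : ℝ) * (D : ℝ)) := by
  have : NeZero D := ⟨by omega⟩
  have hT := sq_sum_inner_tracelessPart_le hD hρ hM
  rw [sum_sum_re_trace_mul_eq_add_inner hρ hM]
  simp only [Fintype.card_fin] at hT ⊢
  set T := ∑ x : Fin n → Fin d,
    ⟪frobVec (tracelessPart (ρ x)), ∑ y, frobVec (tracelessPart (M y (x y)))⟫_ℝ
  have hD1 : (0 : ℝ) ≤ D - 1 := sub_nonneg.2 (by exact_mod_cast hD)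
  have hdn : (d : ℝ) ^ n = d ^ (n - 1) * d := by rw [← pow_succ, Nat.sub_add_cancel hn]
  have hTle : T ≤ n * d ^ n * ((D - 1) / √(n * d * D)) := by
    refine le_of_sq_le_sq (hT.trans_eq ?_) (by positivity)
    rw [mul_pow, div_pow, Real.sq_sqrt (by positivity), hdn]
    field_simp
  calc 1 / ((n : ℝ) * d ^ n) * (n * d ^ (n - 1) + T)
      ≤ 1 / ((n : ℝ) * d ^ n) * (n * d ^ (n - 1) + n * d ^ n * ((D - 1) / √(n * d * D))) := by
        gcongr
    _ = 1 / d + (D - 1) / √(n * d * D) := by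
        rw [hdn]
        field_simp
end

section
/- Let n ≥ 1, d ≥ 1, D ≥ 1. For every family of quantum states ρ_x on ℂ^D indexed by strings x ∈ [d]^n, and every family of d-outcome POVMs (M_{b|y})_{b∈[d]} on ℂ^D indexed by y ∈ [n], the average success probability satisfies (1/(n dⁿ)) Σ_{x∈[d]^n} Σ_{y=1}^n Tr(ρ_x M_{x_y|y}) ≤ (1/n)·(1 + (n-1)·√D/d). -/
open scoped ComplexOrder

/-!
Fix `x`, write `Aᵧ = M_{xᵧ|y}`, `S = ∑ᵧ Aᵧ` and `T = Tr(ρ S)`. Cauchy–Schwarz for the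
Hilbert–Schmidt inner product gives `T² ≤ Tr(S ρ S) = ∑ᵧ Tr(Aᵧ ρ Aᵧ) + ∑_{y ≠ y'} Tr(Aᵧ ρ A_{y'})`.
As `0 ≤ Aᵧ ≤ 1`, the diagonal part is at most `T`; writing `ρ`, `Aᵧ`, `A_{y'}` as Gram matrices,
Cauchy–Schwarz and submultiplicativity of the Frobenius norm bound each off-diagonal term by
`√(Tr(ρ Aᵧ) Tr(ρ A_{y'})) · √Tr(Aᵧ A_{y'})`. Summing, `T ≤ 1 + √(1 - 1/n) · √Q(x)` with
`Q(x) = ∑_{y ≠ y'} Tr(Aᵧ A_{y'})`. Completeness of the POVMs makes `∑ₓ Q(x) = n (n - 1) d^{n-2} D`,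
and a last Cauchy–Schwarz over `x` yields the bound.
-/

open Finset Matrix WithLp

section Combinatorics

variable {ι κ M : Type*} [DecidableEq ι] [AddCommMonoid M]

lemma Finset.sum_sum_eq_sum_add_sum_offDiag (s : Finset ι) (f : ι → ι → M) :
    ∑ i ∈ s, ∑ j ∈ s, f i j = ∑ i ∈ s, f i i + ∑ p ∈ s.offDiag, f p.1 p.2 := by
  rw [← sum_product', ← diag_union_offDiag, sum_union (disjoint_diag_offDiag s), sum_diag]

lemma Finset.sum_offDiag_mul_le (s : Finset ι) (t : ι → ℝ) :
    ∑ p ∈ s.offDiag, t p.1 * t p.2 ≤ (1 - (#s : ℝ)⁻¹) * (∑ i ∈ s, t i) ^ 2 := by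
  have hsplit := s.sum_sum_eq_sum_add_sum_offDiag fun i j => t i * t j
  rw [← sum_mul_sum, ← sq] at hsplit
  have hcs : (∑ i ∈ s, t i) ^ 2 / #s ≤ ∑ i ∈ s, t i * t i :=
    div_le_of_le_mul₀ (Nat.cast_nonneg _) (sum_nonneg fun i _ => mul_self_nonneg (t i))
      (by simpa [sq, mul_comm] using sq_sum_le_card_mul_sum_sq (s := s) (f := t))
  rw [sub_mul, one_mul, ← div_eq_inv_mul]
  linarith

variable [Fintype ι] [Fintype κ]

lemma Fintype.sum_comp_eval (i : ι) (f : κ → M) :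
    ∑ x : ι → κ, f (x i) = Fintype.card κ ^ (Fintype.card ι - 1) • ∑ a, f a := by
  rw [← (Equiv.funSplitAt i κ).symm.sum_comp, Fintype.sum_prod_type]
  simp [smul_sum, Fintype.card_subtype_compl]

lemma Fintype.sum_comp_eval_eval {i j : ι} (hij : i ≠ j) (g : κ → κ → M) :
    ∑ x : ι → κ, g (x i) (x j) = Fintype.card κ ^ (Fintype.card ι - 2) • ∑ a, ∑ b, g a b := by
  rw [← (Equiv.funSplitAt i κ).symm.sum_comp, Fintype.sum_prod_type, smul_sum]
  refine Finset.sum_congr rfl fun a _ => ?_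
  have := Fintype.sum_comp_eval (⟨j, hij.symm⟩ : {k // k ≠ i}) (g a)
  simp only [Fintype.card_subtype_compl, Fintype.card_unique, Nat.sub_sub] at this
  simpa [hij.symm] using this

end Combinatorics

namespace Matrix

section Frobenius

attribute [local instance] frobeniusSeminormedAddCommGroup

variable {𝕜 k l m n : Type*} [RCLike 𝕜] [Fintype k] [Fintype l] [Fintype m] [Fintype n]

lemma trace_conjTranspose_mul_eq_inner (X Y : Matrix m n 𝕜) :
    (Xᴴ * Y).trace = inner 𝕜 (toLp 2 fun i => toLp 2 (X i)) (toLp 2 fun i => toLp 2 (Y i)) := by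
  simp only [trace, diag, mul_apply, conjTranspose_apply, PiLp.inner_apply, RCLike.inner_apply]
  rw [Finset.sum_comm]
  simp [mul_comm]

lemma norm_trace_conjTranspose_mul_le (X Y : Matrix m n 𝕜) :
    ‖(Xᴴ * Y).trace‖ ≤ ‖X‖ * ‖Y‖ := by
  rw [trace_conjTranspose_mul_eq_inner]
  exact norm_inner_le_norm _ _

lemma frobenius_norm_sq_eq_re_trace (X : Matrix m n 𝕜) :
    ‖X‖ ^ 2 = RCLike.re (Xᴴ * X).trace := by
  rw [trace_conjTranspose_mul_eq_inner, inner_self_eq_norm_sq_to_K, ← RCLike.ofReal_pow,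
    RCLike.ofReal_re]
  rfl

lemma frobenius_norm_mul_conjTranspose_sq (X : Matrix k m 𝕜) (Y : Matrix l m 𝕜) :
    ‖X * Yᴴ‖ ^ 2 = RCLike.re (Xᴴ * X * (Yᴴ * Y)).trace := by
  rw [frobenius_norm_sq_eq_re_trace, conjTranspose_mul, conjTranspose_conjTranspose,
    Matrix.mul_assoc, trace_mul_comm Y]
  simp only [Matrix.mul_assoc]

namespace PosSemidef

open scoped MatrixOrder

variable [DecidableEq m]

lemma exists_eq_conjTranspose_mul_self {A : Matrix m m 𝕜} (hA : A.PosSemidef) :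
    ∃ X : Matrix m m 𝕜, A = Xᴴ * X :=
  CStarAlgebra.nonneg_iff_eq_star_mul_self.mp hA.nonneg

lemma re_trace_mul_nonneg {A B : Matrix m m 𝕜} (hA : A.PosSemidef) (hB : B.PosSemidef) :
    0 ≤ RCLike.re (A * B).trace := by
  obtain ⟨X, rfl⟩ := hA.exists_eq_conjTranspose_mul_self
  obtain ⟨Y, rfl⟩ := hB.exists_eq_conjTranspose_mul_self
  rw [← frobenius_norm_mul_conjTranspose_sq]
  positivity

lemma sq_re_trace_mul_le {ρ S : Matrix m m 𝕜} (hρ : ρ.PosSemidef) (hS : S.IsHermitian) :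
    RCLike.re (ρ * S).trace ^ 2 ≤ RCLike.re ρ.trace * RCLike.re (S * ρ * S).trace := by
  obtain ⟨R, rfl⟩ := hρ.exists_eq_conjTranspose_mul_self
  have hSρS : S * (Rᴴ * R) * S = (R * S)ᴴ * (R * S) := by
    rw [conjTranspose_mul, hS.eq]; simp only [mul_assoc]
  rw [hSρS, ← frobenius_norm_sq_eq_re_trace, ← frobenius_norm_sq_eq_re_trace, ← mul_pow,
    mul_assoc]
  calc RCLike.re (Rᴴ * (R * S)).trace ^ 2 ≤ ‖(Rᴴ * (R * S)).trace‖ ^ 2 :=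
        sq_le_sq' (neg_le_of_abs_le (RCLike.abs_re_le_norm _)) (RCLike.re_le_norm _)
    _ ≤ (‖R‖ * ‖R * S‖) ^ 2 := by gcongr; exact norm_trace_conjTranspose_mul_le _ _

lemma re_trace_mul_mul_self_le {ρ A : Matrix m m 𝕜} (hρ : ρ.PosSemidef) (hA : A.PosSemidef)
    (hA1 : (1 - A).PosSemidef) : RCLike.re (A * ρ * A).trace ≤ RCLike.re (ρ * A).trace := by
  obtain ⟨s, hs, hsA⟩ :=
    CStarAlgebra.nonneg_iff_exists_isSelfAdjoint_and_eq_mul_self.mp hA.nonneg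
  have hgap : (A - A * A).PosSemidef := by
    have hs' : sᴴ = s := hs
    have h : A - A * A = s * (1 - A) * sᴴ := by rw [hs', hsA]; noncomm_ring
    exact h ▸ hA1.mul_mul_conjTranspose_same s
  have := hρ.re_trace_mul_nonneg hgap
  rw [mul_sub, trace_sub, map_sub, sub_nonneg] at this
  rwa [trace_mul_cycle, trace_mul_comm]

lemma re_trace_mul_mul_le {ρ A B : Matrix m m 𝕜} (hρ : ρ.PosSemidef) (hA : A.PosSemidef)
    (hB : B.PosSemidef) :
    RCLike.re (A * ρ * B).trace ≤
      √(RCLike.re (ρ * A).trace * RCLike.re (ρ * B).trace) * √(RCLike.re (A * B).trace) := by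
  obtain ⟨R, rfl⟩ := hρ.exists_eq_conjTranspose_mul_self
  obtain ⟨X, rfl⟩ := hA.exists_eq_conjTranspose_mul_self
  obtain ⟨Y, rfl⟩ := hB.exists_eq_conjTranspose_mul_self
  have hcyc : (Xᴴ * X * (Rᴴ * R) * (Yᴴ * Y)).trace =
      ((X * Yᴴ)ᴴ * ((R * Xᴴ)ᴴ * (R * Yᴴ))).trace := by
    rw [conjTranspose_mul, conjTranspose_mul, conjTranspose_conjTranspose,
      conjTranspose_conjTranspose, trace_mul_comm, mul_assoc, trace_mul_comm]
    simp only [mul_assoc]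
  rw [← frobenius_norm_mul_conjTranspose_sq, ← frobenius_norm_mul_conjTranspose_sq,
    ← frobenius_norm_mul_conjTranspose_sq, ← mul_pow, Real.sqrt_sq (by positivity),
    Real.sqrt_sq (norm_nonneg _), hcyc]
  calc RCLike.re ((X * Yᴴ)ᴴ * ((R * Xᴴ)ᴴ * (R * Yᴴ))).trace
      ≤ ‖X * Yᴴ‖ * ‖(R * Xᴴ)ᴴ * (R * Yᴴ)‖ :=
        (RCLike.re_le_norm _).trans (norm_trace_conjTranspose_mul_le _ _)
    _ ≤ ‖X * Yᴴ‖ * (‖R * Xᴴ‖ * ‖R * Yᴴ‖) := by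
        gcongr
        exact (frobenius_norm_mul _ _).trans_eq (by rw [frobenius_norm_conjTranspose])
    _ = ‖R * Xᴴ‖ * ‖R * Yᴴ‖ * ‖X * Yᴴ‖ := mul_comm _ _

end PosSemidef

end Frobenius

namespace PosSemidef

variable {𝕜 m ι : Type*} [RCLike 𝕜] [Fintype m] [DecidableEq m] [Fintype ι] [DecidableEq ι]
  {ρ : Matrix m m 𝕜} {A : ι → Matrix m m 𝕜}

lemma re_trace_sum_mul_mul_sum_le (hρ : ρ.PosSemidef) (hA : ∀ i, (A i).PosSemidef)
    (hA1 : ∀ i, (1 - A i).PosSemidef) :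
    RCLike.re ((∑ i, A i) * ρ * ∑ i, A i).trace ≤ ∑ i, RCLike.re (ρ * A i).trace +
      √(∑ p ∈ univ.offDiag, RCLike.re (ρ * A p.1).trace * RCLike.re (ρ * A p.2).trace) *
        √(∑ p ∈ univ.offDiag, RCLike.re (A p.1 * A p.2).trace) := by
  have hexpand : RCLike.re ((∑ i, A i) * ρ * ∑ i, A i).trace =
      ∑ i, RCLike.re (A i * ρ * A i).trace +
        ∑ p ∈ univ.offDiag, RCLike.re (A p.1 * ρ * A p.2).trace := by
    simp only [sum_mul, mul_sum, trace_sum, map_sum]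
    rw [sum_comm]
    exact sum_sum_eq_sum_add_sum_offDiag _ _
  rw [hexpand]
  gcongr ?_ + ?_
  · exact sum_le_sum fun i _ => hρ.re_trace_mul_mul_self_le (hA i) (hA1 i)
  · calc _ ≤ ∑ p ∈ univ.offDiag, √(RCLike.re (ρ * A p.1).trace * RCLike.re (ρ * A p.2).trace) *
            √(RCLike.re (A p.1 * A p.2).trace) :=
          sum_le_sum fun p _ => hρ.re_trace_mul_mul_le (hA p.1) (hA p.2)
      _ ≤ _ := Real.sum_sqrt_mul_sqrt_le _
          (fun p => mul_nonneg (hρ.re_trace_mul_nonneg (hA p.1)) (hρ.re_trace_mul_nonneg (hA p.2)))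
          (fun p => (hA p.1).re_trace_mul_nonneg (hA p.2))

lemma sum_re_trace_mul_le (hρ : ρ.PosSemidef) (hρ1 : ρ.trace = 1)
    (hA : ∀ i, (A i).PosSemidef) (hA1 : ∀ i, (1 - A i).PosSemidef) :
    ∑ i, RCLike.re (ρ * A i).trace ≤ 1 + √(1 - (Fintype.card ι : ℝ)⁻¹) *
      √(∑ p ∈ univ.offDiag, RCLike.re (A p.1 * A p.2).trace) := by
  have hT0 : 0 ≤ ∑ i, RCLike.re (ρ * A i).trace :=
    sum_nonneg fun i _ => hρ.re_trace_mul_nonneg (hA i)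
  have hS : (∑ i, A i).IsHermitian := (posSemidef_sum univ fun i _ => hA i).isHermitian
  have hoff : √(∑ p ∈ univ.offDiag, RCLike.re (ρ * A p.1).trace * RCLike.re (ρ * A p.2).trace) ≤
      √(1 - (Fintype.card ι : ℝ)⁻¹) * ∑ i, RCLike.re (ρ * A i).trace := by
    refine (Real.sqrt_le_sqrt ((univ : Finset ι).sum_offDiag_mul_le fun i =>
      RCLike.re (ρ * A i).trace)).trans_eq ?_
    rw [Real.sqrt_mul' _ (sq_nonneg _), Real.sqrt_sq hT0, card_univ]
  have hsq := hρ.sq_re_trace_mul_le hS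
  rw [hρ1, RCLike.one_re, one_mul, mul_sum, trace_sum, map_sum] at hsq
  replace hsq := hsq.trans (hρ.re_trace_sum_mul_mul_sum_le hA hA1)
  have hcq : 0 ≤ √(1 - (Fintype.card ι : ℝ)⁻¹) *
      √(∑ p ∈ univ.offDiag, RCLike.re (A p.1 * A p.2).trace) := by positivity
  nlinarith [mul_le_mul_of_nonneg_right hoff
    (Real.sqrt_nonneg (∑ p ∈ univ.offDiag, RCLike.re (A p.1 * A p.2).trace))]

end PosSemidef

end Matrix

namespace IsPOVM

variable {d D : ℕ} {M : Fin d → Matrix (Fin D) (Fin D) ℂ}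

lemma posSemidef_one_sub (hM : IsPOVM M) (b : Fin d) : (1 - M b).PosSemidef := by
  rw [← hM.2, ← add_sum_erase _ _ (mem_univ b), add_sub_cancel_left]
  exact posSemidef_sum _ fun c _ => hM.1 c

lemma sum_sum_re_trace_mul {d' : ℕ} {N : Fin d' → Matrix (Fin D) (Fin D) ℂ} (hM : IsPOVM M)
    (hN : IsPOVM N) : ∑ a, ∑ b, (M a * N b).trace.re = D := by
  simp_rw [← Complex.re_sum, ← trace_sum, ← mul_sum, ← sum_mul, hM.2, hN.2, mul_one, trace_one]
  simp

end IsPOVM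

section RandomAccessCode

variable {ι : Type*} [Fintype ι] [DecidableEq ι] {d D : ℕ}

lemma sum_sum_offDiag_re_trace_mul {M : ι → Fin d → Matrix (Fin D) (Fin D) ℂ}
    (hM : ∀ y, IsPOVM (M y)) :
    ∑ x : ι → Fin d, ∑ p ∈ univ.offDiag, (M p.1 (x p.1) * M p.2 (x p.2)).trace.re =
      Fintype.card ι * (Fintype.card ι - 1) * (d ^ (Fintype.card ι - 2) * D) := by
  rw [sum_comm, sum_congr rfl fun p hp => Fintype.sum_comp_eval_eval (mem_offDiag.1 hp).2.2
    fun a b => (M p.1 a * M p.2 b).trace.re]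
  simp only [(hM _).sum_sum_re_trace_mul (hM _), sum_const, offDiag_card, card_univ,
    nsmul_eq_mul, Fintype.card_fin]
  push_cast [Nat.le_mul_self]
  ring

lemma sum_sum_re_trace_mul_le (ρ : (ι → Fin d) → Matrix (Fin D) (Fin D) ℂ)
    (M : ι → Fin d → Matrix (Fin D) (Fin D) ℂ) (hρ : ∀ x, IsState (ρ x))
    (hM : ∀ y, IsPOVM (M y)) :
    ∑ x : ι → Fin d, ∑ y, (ρ x * M y (x y)).trace.re ≤
      d ^ Fintype.card ι + √(1 - (Fintype.card ι : ℝ)⁻¹) * √(d ^ Fintype.card ι *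
        (Fintype.card ι * (Fintype.card ι - 1) * (d ^ (Fintype.card ι - 2) * D))) := by
  set Q : (ι → Fin d) → ℝ := fun x =>
    ∑ p ∈ univ.offDiag, (M p.1 (x p.1) * M p.2 (x p.2)).trace.re
  have hQ0 : ∀ x, 0 ≤ Q x := fun x =>
    sum_nonneg fun p _ => ((hM p.1).1 _).re_trace_mul_nonneg ((hM p.2).1 _)
  calc ∑ x : ι → Fin d, ∑ y, (ρ x * M y (x y)).trace.re
      ≤ ∑ x : ι → Fin d, (1 + √(1 - (Fintype.card ι : ℝ)⁻¹) * √(Q x)) :=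
        sum_le_sum fun x _ => PosSemidef.sum_re_trace_mul_le (hρ x).1 (hρ x).2
          (fun y => (hM y).1 _) (fun y => (hM y).posSemidef_one_sub _)
    _ ≤ _ := by
        rw [sum_add_distrib, ← mul_sum, ← sum_sum_offDiag_re_trace_mul hM,
          Real.sqrt_mul (by positivity)]
        simp only [sum_const, card_univ, Fintype.card_fun, Fintype.card_fin, nsmul_eq_mul,
          mul_one, Nat.cast_pow]
        gcongr
        simpa using Real.sum_sqrt_mul_sqrt_le univ (fun _ => zero_le_one) hQ0

end RandomAccessCode

theorem qrac_bound_two_general {n d D : ℕ} (hn : 1 ≤ n) (hd : 1 ≤ d)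
    (ρ : (Fin n → Fin d) → Matrix (Fin D) (Fin D) ℂ)
    (M : Fin n → Fin d → Matrix (Fin D) (Fin D) ℂ)
    (hρ : ∀ x, IsState (ρ x))
    (hM : ∀ y, IsPOVM (M y)) :
    (1 / ((n : ℝ) * (d : ℝ) ^ n)) *
        ∑ x : Fin n → Fin d, ∑ y : Fin n, ((ρ x * M y (x y)).trace).re
      ≤ (1 / (n : ℝ)) * (1 + ((n : ℝ) - 1) * Real.sqrt (D : ℝ) / (d : ℝ)) := by
  have hsum := sum_sum_re_trace_mul_le ρ M hρ hM
  rw [Fintype.card_fin] at hsum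
  have hn1 : (0 : ℝ) ≤ n - 1 := sub_nonneg.2 (by exact_mod_cast hn)
  have hrad : (1 - (n : ℝ)⁻¹) * (d ^ n * (n * (n - 1) * (d ^ (n - 2) * D))) =
      ((n - 1) * d ^ (n - 1)) ^ 2 * D := by
    -- for `n = 1` the truncated exponent `n - 2` is harmless: the factor `n - 1` vanishes
    obtain ⟨_ | k, rfl⟩ : ∃ k, n = k + 1 := ⟨n - 1, by omega⟩
    · simp
    · simp only [Nat.add_sub_cancel, show k + 1 + 1 - 2 = k by omega]
      push_cast
      field_simp
      ring
  have hoff : √(1 - (n : ℝ)⁻¹) * √(d ^ n * (n * (n - 1) * (d ^ (n - 2) * D))) =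
      (n - 1) * d ^ (n - 1) * √D := by
    rw [← Real.sqrt_mul' _ (by positivity), hrad, Real.sqrt_mul' _ (by positivity),
      Real.sqrt_sq (by positivity)]
  rw [hoff] at hsum
  calc (1 / ((n : ℝ) * (d : ℝ) ^ n)) * ∑ x : Fin n → Fin d, ∑ y, ((ρ x * M y (x y)).trace).re
      ≤ (1 / ((n : ℝ) * (d : ℝ) ^ n)) * (d ^ n + (n - 1) * d ^ (n - 1) * √D) := by gcongr
    _ = (1 / (n : ℝ)) * (1 + ((n : ℝ) - 1) * Real.sqrt (D : ℝ) / (d : ℝ)) := by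
      have hd0 : (d : ℝ) ≠ 0 := by positivity
      rw [← pow_sub_one_mul (by omega : n ≠ 0)]
      field_simp

/-- **Result 2**: the average success probability of any quantum random access code with
`n` inputs from a `d`-letter alphabet and message dimension `D` is at most
`(1/n)·(1 + (n-1)·√D/d)`. -/
theorem qrac_bound_two {n d D : ℕ} (hn : 1 ≤ n) (hd : 1 ≤ d) (hD : 1 ≤ D)
    (ρ : (Fin n → Fin d) → Matrix (Fin D) (Fin D) ℂ)
    (M : Fin n → Fin d → Matrix (Fin D) (Fin D) ℂ)
    (hρ : ∀ x, IsState (ρ x))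
    (hM : ∀ y, IsPOVM (M y)) :
    (1 / ((n : ℝ) * (d : ℝ) ^ n)) *
        ∑ x : Fin n → Fin d, ∑ y : Fin n, ((ρ x * M y (x y)).trace).re
      ≤ (1 / (n : ℝ)) * (1 + ((n : ℝ) - 1) * Real.sqrt (D : ℝ) / (d : ℝ)) :=
  qrac_bound_two_general hn hd ρ M hρ hM
end

section
/- Let d ≥ 1 and n ≥ 1 with n ≤ d, and set D = d. For every family of quantum states ρ_x on ℂ^d indexed by strings x ∈ [d]^n, and every family of d-outcome POVMs (M_{b|y})_{b∈[d]} on ℂ^d indexed by y ∈ [n], the average success probability satisfies (1/(n dⁿ)) Σ_{x∈[d]^n} Σ_{y=1}^n Tr(ρ_x M_{x_y|y}) ≤ (1/n)·(1 + (n-1)/√d). -/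
open scoped ComplexOrder

namespace QRACproof

open Matrix Finset

variable {k : ℕ}

open scoped MatrixOrder in
noncomputable def _root_.Matrix.PosSemidef.sqrt {A : Matrix (Fin k) (Fin k) ℂ}
    (_ : A.PosSemidef) : Matrix (Fin k) (Fin k) ℂ := CFC.sqrt A

open scoped MatrixOrder in
lemma _root_.Matrix.PosSemidef.posSemidef_sqrt {A : Matrix (Fin k) (Fin k) ℂ}
    (hA : A.PosSemidef) : hA.sqrt.PosSemidef := (CFC.sqrt_nonneg A).posSemidef

open scoped MatrixOrder in
lemma _root_.Matrix.PosSemidef.sqrt_mul_self {A : Matrix (Fin k) (Fin k) ℂ}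
    (hA : A.PosSemidef) : hA.sqrt * hA.sqrt = A := CFC.sqrt_mul_sqrt_self A hA.nonneg

noncomputable def fsq (A : Matrix (Fin k) (Fin k) ℂ) : ℝ :=
  ∑ i, ∑ j, Complex.normSq (A i j)

lemma fsq_nonneg (A : Matrix (Fin k) (Fin k) ℂ) : 0 ≤ fsq A := by
  apply Finset.sum_nonneg; intro i _; apply Finset.sum_nonneg; intro j _
  exact Complex.normSq_nonneg _

lemma trace_conjTranspose_mul (A B : Matrix (Fin k) (Fin k) ℂ) :
    (Aᴴ * B).trace = ∑ j, ∑ i, (starRingEnd ℂ) (A i j) * B i j := by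
  simp [Matrix.trace, Matrix.mul_apply, Matrix.diag, Matrix.conjTranspose_apply]

lemma enorm_sq (x : EuclideanSpace ℂ (Fin k)) : ‖x‖^2 = ∑ l, Complex.normSq (x l) := by
  rw [EuclideanSpace.norm_eq, Real.sq_sqrt (by positivity)]
  congr 1; ext l
  rw [Complex.sq_norm]

lemma inner_euclid (x y : EuclideanSpace ℂ (Fin k)) :
    inner (𝕜 := ℂ) x y = ∑ l, (starRingEnd ℂ) (x l) * y l := by
  rw [PiLp.inner_apply]; simp [RCLike.inner_apply, mul_comm]

/-- Cauchy–Schwarz for the Frobenius inner product. -/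
lemma abs_trace_le (A B : Matrix (Fin k) (Fin k) ℂ) :
    ‖(Aᴴ * B).trace‖ ≤ Real.sqrt (fsq A) * Real.sqrt (fsq B) := by
  let u : EuclideanSpace ℂ (Fin k × Fin k) := WithLp.toLp 2 (fun p : Fin k × Fin k => A p.2 p.1)
  let v : EuclideanSpace ℂ (Fin k × Fin k) := WithLp.toLp 2 (fun p : Fin k × Fin k => B p.2 p.1)
  have h1 : (Aᴴ * B).trace = inner (𝕜 := ℂ) u v := by
    rw [trace_conjTranspose_mul, PiLp.inner_apply]
    rw [Fintype.sum_prod_type]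
    simp [u, v, RCLike.inner_apply, mul_comm]
  have hnA : ‖u‖ = Real.sqrt (fsq A) := by
    rw [EuclideanSpace.norm_eq]
    congr 1
    rw [Fintype.sum_prod_type, fsq, Finset.sum_comm]
    congr 1; ext j; congr 1; ext i
    rw [Complex.sq_norm]
  have hnB : ‖v‖ = Real.sqrt (fsq B) := by
    rw [EuclideanSpace.norm_eq]
    congr 1
    rw [Fintype.sum_prod_type, fsq, Finset.sum_comm]
    congr 1; ext j; congr 1; ext i
    rw [Complex.sq_norm]
  rw [h1]
  calc ‖inner (𝕜 := ℂ) u v‖ ≤ ‖u‖ * ‖v‖ := norm_inner_le_norm u v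
    _ = Real.sqrt (fsq A) * Real.sqrt (fsq B) := by rw [hnA, hnB]

/-- Frobenius norm is submultiplicative. -/
lemma fsq_mul_le (X W : Matrix (Fin k) (Fin k) ℂ) : fsq (X * W) ≤ fsq X * fsq W := by
  have key : ∀ i j, Complex.normSq ((X*W) i j)
      ≤ (∑ l, Complex.normSq (X i l)) * (∑ l, Complex.normSq (W l j)) := by
    intro i j
    let x : EuclideanSpace ℂ (Fin k) := WithLp.toLp 2 (fun l => (starRingEnd ℂ) (X i l))
    let w : EuclideanSpace ℂ (Fin k) := WithLp.toLp 2 (fun l => W l j)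
    have h1 : (X*W) i j = inner (𝕜 := ℂ) x w := by
      rw [inner_euclid, Matrix.mul_apply]
      simp [x, w]
    have h2 : ‖inner (𝕜 := ℂ) x w‖ ≤ ‖x‖ * ‖w‖ := by
      exact norm_inner_le_norm x w
    have h3 : Complex.normSq ((X*W) i j) ≤ (‖x‖ * ‖w‖)^2 := by
      rw [h1, ← Complex.sq_norm]
      exact pow_le_pow_left₀ (norm_nonneg _) h2 2
    calc Complex.normSq ((X*W) i j) ≤ (‖x‖ * ‖w‖)^2 := h3
      _ = ‖x‖^2 * ‖w‖^2 := by ring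
      _ = (∑ l, Complex.normSq (X i l)) * (∑ l, Complex.normSq (W l j)) := by
          rw [enorm_sq, enorm_sq]
          simp [x, w]
  calc fsq (X * W) ≤ ∑ i, ∑ j, (∑ l, Complex.normSq (X i l)) * (∑ l, Complex.normSq (W l j)) := by
        apply Finset.sum_le_sum; intro i _; apply Finset.sum_le_sum; intro j _; exact key i j
    _ = (∑ i, ∑ l, Complex.normSq (X i l)) * (∑ j, ∑ l, Complex.normSq (W l j)) := by
        rw [Finset.sum_mul_sum]
    _ = fsq X * fsq W := by
        rw [fsq, fsq]
        congr 1
        exact Finset.sum_comm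

lemma trace_conjTranspose_mul_self_re (A : Matrix (Fin k) (Fin k) ℂ) :
    ((Aᴴ * A).trace).re = fsq A := by
  rw [trace_conjTranspose_mul]
  rw [Complex.re_sum]
  rw [fsq, Finset.sum_comm]
  congr 1; ext j
  rw [Complex.re_sum]
  congr 1; ext i
  rw [← Complex.normSq_eq_conj_mul_self]
  simp

/-- `fsq` of a product of two Hermitian matrices via a trace. -/
lemma fsq_herm (p q : Matrix (Fin k) (Fin k) ℂ) (hp : pᴴ = p) (hq : qᴴ = q) :
    fsq (p * q) = (((p*p) * (q*q)).trace).re := by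
  rw [← trace_conjTranspose_mul_self_re]
  have h : (((p*q)ᴴ) * (p*q)).trace = ((p*p)*(q*q)).trace := by
    rw [conjTranspose_mul, hp, hq]
    calc ((q*p) * (p*q)).trace = ((p*q) * (q*p)).trace := trace_mul_comm _ _
      _ = (p*(q*q)*p).trace := by simp only [Matrix.mul_assoc]
      _ = (p*p*(q*q)).trace := trace_mul_cycle p (q*q) p
  rw [h]

lemma psd_trace_re_nonneg {A B : Matrix (Fin k) (Fin k) ℂ}
    (hA : A.PosSemidef) (hB : B.PosSemidef) : 0 ≤ ((A * B).trace).re := by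
  have h := fsq_herm hA.sqrt hB.sqrt hA.posSemidef_sqrt.1.eq hB.posSemidef_sqrt.1.eq
  rw [hA.sqrt_mul_self, hB.sqrt_mul_self] at h
  rw [← h]  -- goal: 0 ≤ fsq _
  exact fsq_nonneg _

/-- Key off-diagonal bound: |Tr(ρ M N)| ≤ √Tr(MN) √Tr(ρM) √Tr(ρN). -/
lemma key3 {R A B : Matrix (Fin k) (Fin k) ℂ}
    (hR : R.PosSemidef) (hA : A.PosSemidef) (hB : B.PosSemidef) :
    ‖(R * (A * B)).trace‖ ≤
      Real.sqrt (((A*B).trace).re) *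
        (Real.sqrt (((R*A).trace).re) * Real.sqrt (((R*B).trace).re)) := by
  set r := hR.sqrt with hrdef
  set m := hA.sqrt with hmdef
  set q := hB.sqrt with hqdef
  have hr : rᴴ = r := hR.posSemidef_sqrt.1.eq
  have hm : mᴴ = m := hA.posSemidef_sqrt.1.eq
  have hq : qᴴ = q := hB.posSemidef_sqrt.1.eq
  have hrr : r * r = R := hR.sqrt_mul_self
  have hmm : m * m = A := hA.sqrt_mul_self
  have hqq : q * q = B := hB.sqrt_mul_self
  have e : (R * (A * B)).trace = (((m*r)ᴴ) * ((m*q) * (q*r))).trace := by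
    rw [conjTranspose_mul, hm, hr]
    have e2 : (r*m) * ((m*q)*(q*r)) = r * (A*B) * r := by
      rw [← hmm, ← hqq]; simp only [Matrix.mul_assoc]
    rw [e2, trace_mul_cycle r (A*B) r, hrr]
  have hfmr : fsq (m*r) = ((R*A).trace).re := by
    rw [fsq_herm m r hm hr, hmm, hrr, trace_mul_comm]
  have hfqr : fsq (q*r) = ((R*B).trace).re := by
    rw [fsq_herm q r hq hr, hqq, hrr, trace_mul_comm]
  have hfmq : fsq (m*q) = ((A*B).trace).re := by
    rw [fsq_herm m q hm hq, hmm, hqq]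
  calc ‖(R * (A * B)).trace‖
      = ‖(((m*r)ᴴ) * ((m*q) * (q*r))).trace‖ := by rw [e]
    _ ≤ Real.sqrt (fsq (m*r)) * Real.sqrt (fsq ((m*q)*(q*r))) := abs_trace_le _ _
    _ ≤ Real.sqrt (fsq (m*r)) * Real.sqrt (fsq (m*q) * fsq (q*r)) := by
        apply mul_le_mul_of_nonneg_left _ (Real.sqrt_nonneg _)
        exact Real.sqrt_le_sqrt (fsq_mul_le _ _)
    _ = Real.sqrt (fsq (m*q)) * (Real.sqrt (fsq (m*r)) * Real.sqrt (fsq (q*r))) := by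
        rw [Real.sqrt_mul (fsq_nonneg _)]; ring
    _ = _ := by rw [hfmr, hfqr, hfmq]

/-- Cauchy–Schwarz with the state: |Tr(ρ T)| ≤ √Tr(ρ T²) when Tr ρ = 1. -/
lemma key4 {R T : Matrix (Fin k) (Fin k) ℂ}
    (hR : R.PosSemidef) (htr : R.trace = 1) (hT : Tᴴ = T) :
    ‖(R * T).trace‖ ≤ Real.sqrt (((R * (T * T)).trace).re) := by
  set r := hR.sqrt
  have hr : rᴴ = r := hR.posSemidef_sqrt.1.eq
  have hrr : r * r = R := hR.sqrt_mul_self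
  have e : (R * T).trace = ((rᴴ) * (T * r)).trace := by
    rw [hr]
    have : r * (T * r) = r * T * r := by rw [Matrix.mul_assoc]
    rw [this, trace_mul_cycle r T r, hrr]
  have h1 : fsq r = 1 := by
    have : fsq r = ((rᴴ * r).trace).re := (trace_conjTranspose_mul_self_re r).symm
    rw [this, hr, hrr, htr]; simp
  have h2 : fsq (T * r) = ((R * (T * T)).trace).re := by
    rw [← trace_conjTranspose_mul_self_re]
    have h : (((T*r)ᴴ) * (T*r)).trace = (R * (T*T)).trace := by
      rw [conjTranspose_mul, hr, hT]
      have e2 : (r * T) * (T * r) = r * (T*T) * r := by simp only [Matrix.mul_assoc]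
      rw [e2, trace_mul_cycle r (T*T) r, hrr]
    rw [h]
  calc ‖(R * T).trace‖
      = ‖((rᴴ) * (T * r)).trace‖ := by rw [e]
    _ ≤ Real.sqrt (fsq r) * Real.sqrt (fsq (T * r)) := abs_trace_le _ _
    _ = Real.sqrt (((R * (T * T)).trace).re) := by rw [h1, h2, Real.sqrt_one, one_mul]

/-- Diagonal bound: Tr(ρ M²) ≤ Tr(ρ M) when 0 ≤ M ≤ 1. -/
lemma key5 {R A : Matrix (Fin k) (Fin k) ℂ}
    (hR : R.PosSemidef) (hA : A.PosSemidef) (h1A : (1 - A).PosSemidef) :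
    ((R * (A * A)).trace).re ≤ ((R * A).trace).re := by
  set m := hA.sqrt
  have hm : mᴴ = m := hA.posSemidef_sqrt.1.eq
  have hmm : m * m = A := hA.sqrt_mul_self
  have hd : (A - A * A).PosSemidef := by
    have h := h1A.conjTranspose_mul_mul_same (B := m)
    have e : mᴴ * (1 - A) * m = A - A * A := by
      rw [hm, Matrix.mul_sub, Matrix.mul_one, Matrix.sub_mul, hmm, ← hmm]
      have : m * (m * m) * m = (m * m) * (m * m) := by simp only [Matrix.mul_assoc]
      rw [this]
    rwa [e] at h
  have h0 : 0 ≤ ((R * (A - A * A)).trace).re := psd_trace_re_nonneg hR hd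
  rw [Matrix.mul_sub, Matrix.trace_sub, Complex.sub_re] at h0
  linarith

lemma card_ne {α : Type*} [Fintype α] [DecidableEq α] (a : α) :
    Fintype.card {x : α // x ≠ a} = Fintype.card α - 1 := by
  have := Fintype.card_subtype_compl (fun x : α => x = a)
  simpa [Fintype.card_subtype_eq] using this

lemma sum_fun_eval {κ : Type*} [Fintype κ] [DecidableEq κ] {d : ℕ} (j0 : κ) (G : Fin d → ℝ) :
    ∑ g : κ → Fin d, G (g j0)
      = (d ^ (Fintype.card κ - 1) : ℕ) * ∑ c, G c := by
  classical
  rw [← Equiv.sum_comp (Equiv.funSplitAt j0 (Fin d)).symm (fun g => G (g j0))]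
  have happ : ∀ (p : Fin d × ({l : κ // l ≠ j0} → Fin d)),
      G (((Equiv.funSplitAt j0 (Fin d)).symm p) j0) = G p.1 := by
    intro p
    simp [Equiv.funSplitAt, Equiv.piSplitAt]
  rw [Finset.sum_congr rfl (fun p _ => happ p), Fintype.sum_prod_type]
  simp only [Finset.sum_const, Finset.card_univ, nsmul_eq_mul]
  rw [← Finset.mul_sum, Fintype.card_fun, Fintype.card_fin, card_ne]

lemma count_pair {n d : ℕ} (y y' : Fin n) (h : y' ≠ y) (F : Fin d → Fin d → ℝ) :
    ∑ x : Fin n → Fin d, F (x y) (x y') = (d ^ (n-2) : ℕ) * ∑ b, ∑ c, F b c := by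
  classical
  rw [← Equiv.sum_comp (Equiv.funSplitAt y (Fin d)).symm (fun x => F (x y) (x y'))]
  have happ : ∀ (p : Fin d × ({j : Fin n // j ≠ y} → Fin d)),
      F (((Equiv.funSplitAt y (Fin d)).symm p) y) (((Equiv.funSplitAt y (Fin d)).symm p) y')
      = F p.1 (p.2 ⟨y', h⟩) := by
    intro p
    simp [Equiv.funSplitAt, Equiv.piSplitAt, h]
  rw [Finset.sum_congr rfl (fun p _ => happ p), Fintype.sum_prod_type]
  have inner : ∀ b : Fin d, ∑ g : ({j : Fin n // j ≠ y} → Fin d), F b (g ⟨y', h⟩)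
      = (d ^ (n-2) : ℕ) * ∑ c, F b c := by
    intro b
    rw [sum_fun_eval (⟨y', h⟩ : {j : Fin n // j ≠ y}) (fun c => F b c)]
    congr 2
    rw [card_ne, Fintype.card_fin]
    congr 1
  rw [Finset.sum_congr rfl (fun b _ => inner b), ← Finset.mul_sum]

lemma sum_offDiag_eq {n : ℕ} (f : Fin n → Fin n → ℝ) :
    ∑ p ∈ Finset.univ.offDiag, f p.1 p.2 = (∑ y, ∑ y', f y y') - ∑ y, f y y := by
  classical
  have h2 : (Finset.univ.offDiag : Finset (Fin n × Fin n))
      = (Finset.univ ×ˢ Finset.univ).filter (fun p => ¬ p.1 = p.2) := by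
    ext p; simp [Finset.mem_offDiag]
  have h3 := Finset.sum_filter_add_sum_filter_not (Finset.univ ×ˢ Finset.univ)
    (fun p => p.1 = p.2) (fun p => f p.1 p.2)
  have h1 : ∑ p ∈ (Finset.univ ×ˢ Finset.univ), f p.1 p.2 = ∑ y, ∑ y', f y y' :=
    Finset.sum_product _ _ _
  have h4 : ∑ p ∈ (Finset.univ ×ˢ Finset.univ).filter (fun p => p.1 = p.2), f p.1 p.2
      = ∑ y, f y y := by
    rw [Finset.sum_filter, Finset.sum_product]
    simp
  rw [h2]
  rw [h4, h1] at h3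
  linarith

lemma pointwise {n d : ℕ} (hn : 1 ≤ n)
    (R : Matrix (Fin d) (Fin d) ℂ) (hR : R.PosSemidef) (htr : R.trace = 1)
    (A : Fin n → Matrix (Fin d) (Fin d) ℂ) (hA : ∀ y, (A y).PosSemidef)
    (h1A : ∀ y, ((1 : Matrix (Fin d) (Fin d) ℂ) - A y).PosSemidef) :
    ∑ y, ((R * A y).trace).re ≤
      1 + Real.sqrt (((n:ℝ)-1)/n) *
        Real.sqrt (∑ p ∈ Finset.univ.offDiag, ((A p.1 * A p.2).trace).re) := by
  classical
  set t : Fin n → ℝ := fun y => ((R * A y).trace).re with htdef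
  have ht0 : ∀ y, 0 ≤ t y := fun y => psd_trace_re_nonneg hR (hA y)
  set S : ℝ := ∑ y, t y with hSdef
  have hS0 : 0 ≤ S := Finset.sum_nonneg (fun y _ => ht0 y)
  set T : Matrix (Fin d) (Fin d) ℂ := ∑ y, A y with hTdef
  have hTh : Tᴴ = T := by
    rw [hTdef, Matrix.conjTranspose_sum]
    exact Finset.sum_congr rfl (fun y _ => (hA y).1.eq)
  have hStr : S = ((R * T).trace).re := by
    rw [hSdef, hTdef, Matrix.mul_sum, Matrix.trace_sum, Complex.re_sum]
  have hTTpsd : (T*T).PosSemidef := by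
    have h := Matrix.posSemidef_conjTranspose_mul_self T
    rwa [hTh] at h
  have hu0 : 0 ≤ ((R*(T*T)).trace).re := psd_trace_re_nonneg hR hTTpsd
  have hSsq : S^2 ≤ ((R*(T*T)).trace).re := by
    have h12 : S ≤ Real.sqrt (((R*(T*T)).trace).re) := by
      calc S ≤ ‖(R*T).trace‖ := hStr ▸ Complex.re_le_norm _
        _ ≤ _ := key4 hR htr hTh
    calc S^2 ≤ (Real.sqrt (((R*(T*T)).trace).re))^2 := pow_le_pow_left₀ hS0 h12 2
      _ = _ := Real.sq_sqrt hu0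
  set g : Fin n → Fin n → ℝ := fun y y' => ((R * (A y * A y')).trace).re with hgdef
  have hexp : ((R*(T*T)).trace).re = ∑ y, ∑ y', g y y' := by
    have h : T * T = ∑ y, ∑ y', A y * A y' := by rw [hTdef, Finset.sum_mul_sum]
    rw [h]
    simp [Matrix.mul_sum, Matrix.trace_sum, Complex.re_sum, hgdef]
  set Q : ℝ := ∑ p ∈ Finset.univ.offDiag, ((A p.1 * A p.2).trace).re with hQdef
  have hQ0 : 0 ≤ Q :=
    Finset.sum_nonneg (fun p _ => psd_trace_re_nonneg (hA p.1) (hA p.2))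
  have hsplit : ∑ y, ∑ y', g y y'
      = (∑ y, g y y) + ∑ p ∈ Finset.univ.offDiag, g p.1 p.2 := by
    rw [sum_offDiag_eq g]; ring
  have hdiag : ∑ y, g y y ≤ S := by
    apply Finset.sum_le_sum
    intro y _
    exact key5 hR (hA y) (h1A y)
  -- off-diagonal bound
  have hoff : ∑ p ∈ Finset.univ.offDiag, g p.1 p.2
      ≤ Real.sqrt Q * Real.sqrt (∑ p ∈ Finset.univ.offDiag, t p.1 * t p.2) := by
    have hstep : ∑ p ∈ Finset.univ.offDiag, g p.1 p.2
        ≤ ∑ p ∈ Finset.univ.offDiag,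
            Real.sqrt (((A p.1 * A p.2).trace).re) * (Real.sqrt (t p.1) * Real.sqrt (t p.2)) := by
      apply Finset.sum_le_sum
      intro p _
      calc g p.1 p.2 ≤ ‖(R * (A p.1 * A p.2)).trace‖ := Complex.re_le_norm _
        _ ≤ _ := key3 hR (hA p.1) (hA p.2)
    refine hstep.trans ?_
    have hCS := Finset.sum_mul_sq_le_sq_mul_sq Finset.univ.offDiag
      (fun p => Real.sqrt (((A p.1 * A p.2).trace).re))
      (fun p => Real.sqrt (t p.1) * Real.sqrt (t p.2))
    have hsum0 : 0 ≤ ∑ p ∈ Finset.univ.offDiag,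
        Real.sqrt (((A p.1 * A p.2).trace).re) * (Real.sqrt (t p.1) * Real.sqrt (t p.2)) := by
      apply Finset.sum_nonneg; intro p _; positivity
    have hc2 : ∑ p ∈ Finset.univ.offDiag,
        (Real.sqrt (((A p.1 * A p.2).trace).re))^2 = Q := by
      rw [hQdef]
      exact Finset.sum_congr rfl
        (fun p _ => Real.sq_sqrt (psd_trace_re_nonneg (hA p.1) (hA p.2)))
    have ht2 : ∑ p ∈ Finset.univ.offDiag, (Real.sqrt (t p.1) * Real.sqrt (t p.2))^2
        = ∑ p ∈ Finset.univ.offDiag, t p.1 * t p.2 := by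
      apply Finset.sum_congr rfl
      intro p _
      rw [mul_pow, Real.sq_sqrt (ht0 p.1), Real.sq_sqrt (ht0 p.2)]
    rw [hc2, ht2] at hCS
    have htt0 : 0 ≤ ∑ p ∈ Finset.univ.offDiag, t p.1 * t p.2 :=
      Finset.sum_nonneg (fun p _ => mul_nonneg (ht0 p.1) (ht0 p.2))
    calc ∑ p ∈ Finset.univ.offDiag,
          Real.sqrt (((A p.1 * A p.2).trace).re) * (Real.sqrt (t p.1) * Real.sqrt (t p.2))
        = Real.sqrt ((∑ p ∈ Finset.univ.offDiag,
            Real.sqrt (((A p.1 * A p.2).trace).re) * (Real.sqrt (t p.1) * Real.sqrt (t p.2)))^2) := by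
          rw [Real.sqrt_sq hsum0]
      _ ≤ Real.sqrt (Q * ∑ p ∈ Finset.univ.offDiag, t p.1 * t p.2) := Real.sqrt_le_sqrt hCS
      _ = Real.sqrt Q * Real.sqrt (∑ p ∈ Finset.univ.offDiag, t p.1 * t p.2) :=
          Real.sqrt_mul hQ0 _
  -- ∑ offDiag t t ≤ (n-1)/n * S²
  have htt : ∑ p ∈ Finset.univ.offDiag, t p.1 * t p.2 ≤ (((n:ℝ)-1)/n) * S^2 := by
    have h5 : (∑ y, ∑ y', t y * t y') = S^2 := by
      rw [← Finset.sum_mul_sum, ← hSdef]; ring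
    have h6 : S^2 ≤ (n:ℝ) * ∑ y, t y * t y := by
      have hcs := Finset.sum_mul_sq_le_sq_mul_sq Finset.univ t (fun _ => (1:ℝ))
      simp only [mul_one, one_pow] at hcs
      calc S^2 = (∑ y, t y)^2 := by rw [hSdef]
        _ ≤ (∑ y, (t y)^2) * (∑ _y : Fin n, (1:ℝ)) := hcs
        _ = (n:ℝ) * ∑ y, t y * t y := by
            simp [Finset.sum_const, Finset.card_univ, sq, mul_comm]
    rw [sum_offDiag_eq (fun y y' => t y * t y'), h5]
    have hn0 : (0:ℝ) < n := by positivity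
    have h7 : S^2 / n ≤ ∑ y, t y * t y := by
      rw [div_le_iff₀ hn0] at *
      nlinarith [h6]
    have : (((n:ℝ)-1)/n) * S^2 = S^2 - S^2/n := by field_simp
    rw [this]
    linarith
  -- combine: S² ≤ S + √Q √((n-1)/n) S
  have hn1 : (1:ℝ) ≤ (n:ℝ) := by exact_mod_cast hn
  set K : ℝ := Real.sqrt (((n:ℝ)-1)/n) with hKdef
  have hK0 : 0 ≤ K := Real.sqrt_nonneg _
  have hfin : S^2 ≤ S + K * Real.sqrt Q * S := by
    have h8 : Real.sqrt (∑ p ∈ Finset.univ.offDiag, t p.1 * t p.2)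
        ≤ K * S := by
      calc Real.sqrt (∑ p ∈ Finset.univ.offDiag, t p.1 * t p.2)
          ≤ Real.sqrt ((((n:ℝ)-1)/n) * S^2) := Real.sqrt_le_sqrt htt
        _ = K * S := by
            rw [Real.sqrt_mul (div_nonneg (by linarith) (by positivity)) (S^2), Real.sqrt_sq hS0, hKdef]
    calc S^2 ≤ ((R*(T*T)).trace).re := hSsq
      _ = ∑ y, ∑ y', g y y' := hexp
      _ = (∑ y, g y y) + ∑ p ∈ Finset.univ.offDiag, g p.1 p.2 := hsplit
      _ ≤ S + Real.sqrt Q * (K * S) := by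
          have := hoff.trans (mul_le_mul_of_nonneg_left h8 (Real.sqrt_nonneg Q))
          linarith [hdiag]
      _ = S + K * Real.sqrt Q * S := by ring
  -- conclude S ≤ 1 + K √Q
  by_contra hcon
  push_neg at hcon
  have hQs0 : 0 ≤ K * Real.sqrt Q := mul_nonneg hK0 (Real.sqrt_nonneg _)
  nlinarith [hfin, hcon, hS0, hQs0]

lemma psd_add {k : ℕ} {A B : Matrix (Fin k) (Fin k) ℂ}
    (hA : A.PosSemidef) (hB : B.PosSemidef) : (A + B).PosSemidef := by
  exact hA.add hB

lemma psd_sum {k : ℕ} {β : Type*} (s : Finset β) (f : β → Matrix (Fin k) (Fin k) ℂ)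
    (h : ∀ b ∈ s, (f b).PosSemidef) : (∑ b ∈ s, f b).PosSemidef :=
  Finset.sum_induction f _ (fun _ _ ha hb => psd_add ha hb) Matrix.PosSemidef.zero h

end QRACproof

open QRACproof

/-- **Corollary 1, case `D = d`, `n ≤ d`**: the average success probability is at most
`(1/n)·(1 + (n-1)/√d)`. -/
theorem qrac_bound_D_eq_d_n_le_d {n d : ℕ} (hd : 1 ≤ d) (hn : 1 ≤ n) (hnd : n ≤ d)
    (ρ : (Fin n → Fin d) → Matrix (Fin d) (Fin d) ℂ)
    (M : Fin n → Fin d → Matrix (Fin d) (Fin d) ℂ)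
    (hρ : ∀ x, IsState (ρ x))
    (hM : ∀ y, IsPOVM (M y)) :
    (1 / ((n : ℝ) * (d : ℝ) ^ n)) *
        ∑ x : Fin n → Fin d, ∑ y : Fin n, ((ρ x * M y (x y)).trace).re
      ≤ (1 / (n : ℝ)) * (1 + ((n : ℝ) - 1) / Real.sqrt (d : ℝ)) := by
  classical
  have hd0 : (0:ℝ) < (d:ℝ) := by exact_mod_cast hd
  have hn0 : (0:ℝ) < (n:ℝ) := by exact_mod_cast hn
  have hn1 : (1:ℝ) ≤ (n:ℝ) := by exact_mod_cast hn
  have hsd : (0:ℝ) < Real.sqrt d := Real.sqrt_pos.mpr hd0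
  have hcard : (Fintype.card (Fin n → Fin d) : ℝ) = (d:ℝ)^n := by
    rw [Fintype.card_fun, Fintype.card_fin, Fintype.card_fin]; push_cast; ring
  set K : ℝ := Real.sqrt (((n:ℝ)-1)/n) with hKdef
  have hK0 : 0 ≤ K := Real.sqrt_nonneg _
  set Q : (Fin n → Fin d) → ℝ := fun x =>
    ∑ p ∈ Finset.univ.offDiag, ((M p.1 (x p.1) * M p.2 (x p.2)).trace).re with hQdef
  have hQ0 : ∀ x, 0 ≤ Q x := fun x =>
    Finset.sum_nonneg (fun p _ => psd_trace_re_nonneg ((hM p.1).1 _) ((hM p.2).1 _))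
  -- pointwise bound
  have hpt : ∀ x : Fin n → Fin d, ∑ y, ((ρ x * M y (x y)).trace).re
      ≤ 1 + K * Real.sqrt (Q x) := by
    intro x
    have h1A : ∀ y, ((1 : Matrix (Fin d) (Fin d) ℂ) - M y (x y)).PosSemidef := by
      intro y
      have he : (1 : Matrix (Fin d) (Fin d) ℂ) - M y (x y)
          = ∑ b ∈ Finset.univ.erase (x y), M y b := by
        rw [← (hM y).2, ← Finset.add_sum_erase _ _ (Finset.mem_univ (x y)),
          add_sub_cancel_left]
      rw [he]
      exact psd_sum _ _ (fun b _ => (hM y).1 b)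
    exact pointwise hn (ρ x) (hρ x).1 (hρ x).2 (fun y => M y (x y))
      (fun y => (hM y).1 (x y)) h1A
  -- sum of Q over x
  have hQsum : ∑ x : Fin n → Fin d, Q x = ((n:ℝ)*n - n) * ((d:ℝ)^(n-1)) := by
    rw [hQdef, Finset.sum_comm]
    have hterm : ∀ p ∈ (Finset.univ.offDiag : Finset (Fin n × Fin n)),
        (∑ x : Fin n → Fin d, ((M p.1 (x p.1) * M p.2 (x p.2)).trace).re)
          = (d:ℝ)^(n-1) := by
      intro p hp
      have h12 : p.1 ≠ p.2 := (Finset.mem_offDiag.mp hp).2.2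
      have hn2 : 2 ≤ n := by
        have : 1 < Fintype.card (Fin n) :=
          Fintype.one_lt_card_iff_nontrivial.mpr ⟨p.1, p.2, h12⟩
        rwa [Fintype.card_fin] at this
      rw [count_pair p.1 p.2 h12.symm (fun b c => ((M p.1 b * M p.2 c).trace).re)]
      have hin : ∑ b, ∑ c, ((M p.1 b * M p.2 c).trace).re = (d:ℝ) := by
        have e1 : ∑ b, ∑ c, ((M p.1 b * M p.2 c).trace)
            = ((∑ b, M p.1 b) * (∑ c, M p.2 c)).trace := by
          rw [Finset.sum_mul_sum]
          simp [Matrix.trace_sum]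
        have e2 : ∑ b, ∑ c, ((M p.1 b * M p.2 c).trace).re
            = (∑ b, ∑ c, ((M p.1 b * M p.2 c).trace)).re := by
          simp [Complex.re_sum]
        rw [e2, e1, (hM p.1).2, (hM p.2).2, one_mul, Matrix.trace_one]
        simp
      rw [hin]
      push_cast
      rw [← pow_succ]
      congr 1
      omega
    rw [Finset.sum_congr rfl hterm, Finset.sum_const, Finset.offDiag_card,
      Finset.card_univ, Fintype.card_fin, nsmul_eq_mul]
    congr 1
    have : n ≤ n * n := Nat.le_mul_of_pos_left n hn
    push_cast [Nat.cast_sub this]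
    ring
  -- Cauchy–Schwarz over x
  have hsqQ : ∑ x : Fin n → Fin d, Real.sqrt (Q x)
      ≤ Real.sqrt ((d:ℝ)^n) * Real.sqrt (∑ x : Fin n → Fin d, Q x) := by
    have hcs := Finset.sum_mul_sq_le_sq_mul_sq Finset.univ
      (fun x : Fin n → Fin d => Real.sqrt (Q x)) (fun _ => (1:ℝ))
    simp only [mul_one, one_pow] at hcs
    have hq2 : ∑ x : Fin n → Fin d, (Real.sqrt (Q x))^2 = ∑ x : Fin n → Fin d, Q x :=
      Finset.sum_congr rfl (fun x _ => Real.sq_sqrt (hQ0 x))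
    have hc1 : ∑ _x : Fin n → Fin d, (1:ℝ) = (d:ℝ)^n := by
      rw [Finset.sum_const, Finset.card_univ, nsmul_eq_mul, mul_one, hcard]
    rw [hq2, hc1] at hcs
    have hs0 : 0 ≤ ∑ x : Fin n → Fin d, Real.sqrt (Q x) :=
      Finset.sum_nonneg (fun x _ => Real.sqrt_nonneg _)
    calc ∑ x : Fin n → Fin d, Real.sqrt (Q x)
        = Real.sqrt ((∑ x : Fin n → Fin d, Real.sqrt (Q x))^2) := (Real.sqrt_sq hs0).symm
      _ ≤ Real.sqrt ((∑ x : Fin n → Fin d, Q x) * (d:ℝ)^n) := Real.sqrt_le_sqrt hcs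
      _ = Real.sqrt ((d:ℝ)^n) * Real.sqrt (∑ x : Fin n → Fin d, Q x) := by
          rw [mul_comm, Real.sqrt_mul (by positivity)]
  -- the key numeric identity
  have hpow : (d:ℝ)^n * (d:ℝ)^(n-1) = (d:ℝ)^(2*n-1) := by
    rw [← pow_add]; congr 1; omega
  have e2 : Real.sqrt ((d:ℝ)^(2*n-1)) = (d:ℝ)^n / Real.sqrt d := by
    rw [eq_div_iff hsd.ne', ← Real.sqrt_mul (by positivity) (d:ℝ)]
    have : (d:ℝ)^(2*n-1) * d = ((d:ℝ)^n)^2 := by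
      rw [← pow_succ]
      have h2n : 2*n-1+1 = 2*n := by omega
      rw [h2n, two_mul, pow_add, ← sq]
    rw [this, Real.sqrt_sq (by positivity)]
  have e3 : K * (Real.sqrt ((d:ℝ)^n) * Real.sqrt (((n:ℝ)*n - n) * (d:ℝ)^(n-1)))
      = ((n:ℝ)-1) * ((d:ℝ)^n / Real.sqrt d) := by
    have hnn : (0:ℝ) ≤ (n:ℝ)*n - n := by nlinarith
    rw [← Real.sqrt_mul (by positivity) (((n:ℝ)*n - n) * (d:ℝ)^(n-1)), hKdef,
      ← Real.sqrt_mul (div_nonneg (by linarith) (by positivity))]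
    have harg : ((n:ℝ)-1)/n * ((d:ℝ)^n * (((n:ℝ)*n - n) * (d:ℝ)^(n-1)))
        = ((n:ℝ)-1)^2 * (d:ℝ)^(2*n-1) := by
      rw [← hpow]
      field_simp
    rw [harg, Real.sqrt_mul (sq_nonneg _), Real.sqrt_sq (by linarith), e2]
  -- total bound
  have htotal : ∑ x : Fin n → Fin d, ∑ y : Fin n, ((ρ x * M y (x y)).trace).re
      ≤ (d:ℝ)^n * (1 + ((n:ℝ)-1)/Real.sqrt d) := by
    calc ∑ x : Fin n → Fin d, ∑ y : Fin n, ((ρ x * M y (x y)).trace).re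
        ≤ ∑ x : Fin n → Fin d, (1 + K * Real.sqrt (Q x)) :=
          Finset.sum_le_sum (fun x _ => hpt x)
      _ = (d:ℝ)^n + K * ∑ x : Fin n → Fin d, Real.sqrt (Q x) := by
          rw [Finset.sum_add_distrib, Finset.sum_const, Finset.card_univ, nsmul_eq_mul,
            mul_one, hcard, Finset.mul_sum]
      _ ≤ (d:ℝ)^n + K * (Real.sqrt ((d:ℝ)^n) * Real.sqrt (∑ x : Fin n → Fin d, Q x)) := by
          have := mul_le_mul_of_nonneg_left hsqQ hK0
          linarith
      _ = (d:ℝ)^n + ((n:ℝ)-1) * ((d:ℝ)^n / Real.sqrt d) := by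
          rw [hQsum, e3]
      _ = (d:ℝ)^n * (1 + ((n:ℝ)-1)/Real.sqrt d) := by ring
  -- conclude
  calc (1 / ((n : ℝ) * (d : ℝ) ^ n)) *
        ∑ x : Fin n → Fin d, ∑ y : Fin n, ((ρ x * M y (x y)).trace).re
      ≤ (1 / ((n : ℝ) * (d : ℝ) ^ n)) * ((d:ℝ)^n * (1 + ((n:ℝ)-1)/Real.sqrt d)) := by
        apply mul_le_mul_of_nonneg_left htotal (by positivity)
    _ = (1 / (n : ℝ)) * (1 + ((n : ℝ) - 1) / Real.sqrt (d : ℝ)) := by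
        field_simp
end
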